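/- For every nonnegative integer k, every good placement of queens on the n × n board B_n with n = 4k + 3 has size at least n − 1. -/

import Mathlib

/-- The n × n board: squares {1,…,n} × {1,…,n} ⊆ ℤ². -/
noncomputable def board (n : ℕ) : Finset (ℤ × ℤ) :=
  Finset.Icc (1 : ℤ) n ×ˢ Finset.Icc (1 : ℤ) n

/-- Two squares share a column, row, diagonal, or antidiagonal. -/
def SameLine (a b : ℤ × ℤ) : Prop :=
  a.1 = b.1 ∨ a.2 = b.2 ∨ a.1 - a.2 = b.1 - b.2 ∨ a.1 + a.2 = b.1 + b.2

/-- A set of squares contains three (pairwise distinct) squares in a line. -/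
def ThreeInLine (S : Finset (ℤ × ℤ)) : Prop :=
  ∃ a ∈ S, ∃ b ∈ S, ∃ c ∈ S, a ≠ b ∧ a ≠ c ∧ b ≠ c ∧
    ((a.1 = b.1 ∧ b.1 = c.1) ∨ (a.2 = b.2 ∧ b.2 = c.2) ∨
     (a.1 - a.2 = b.1 - b.2 ∧ b.1 - b.2 = c.1 - c.2) ∨
     (a.1 + a.2 = b.1 + b.2 ∧ b.1 + b.2 = c.1 + c.2))

/-- A good placement on B_n: a subset of the board with no three in a line,
    such that adding any unoccupied square of the board creates three in a line. -/
def IsGoodPlacement (n : ℕ) (Q : Finset (ℤ × ℤ)) : Prop :=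
  Q ⊆ board n ∧ ¬ ThreeInLine Q ∧
    ∀ s ∈ board n, s ∉ Q → ThreeInLine (insert s Q)

/-!
Call a line full if it holds two queens. Each of the four directions has at most `⌊|Q|/2⌋` full
lines, and maximality of `Q` puts every empty square on a full line. Let `c ≤ c'` be the extreme
non-full columns and `r ≤ r'` the extreme non-full rows, transposing the board so that
`c' - c ≤ r' - r`. In a non-full row `w`, every square `(x, w)` with `c ≤ x ≤ c'`, except at most
one queen, lies on a full column, a full diagonal `x - w` or a full antidiagonal `x + w`. For
`w = r, r'` the two windows of diagonals overlap in at most one value, and so do the windows of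
antidiagonals, while all columns outside `[c, c']` are full; counting gives
`n ≤ 2⌊|Q|/2⌋ + 2`, which for odd `n` forces `|Q| ≥ n - 1`.
-/

open Finset

/-- Lines of one direction are the level sets of `f`; a line is full if it holds two squares
of `Q`. -/
def fullLines (Q : Finset (ℤ × ℤ)) (f : ℤ × ℤ → ℤ) : Finset ℤ :=
  {v ∈ Q.image f | 2 ≤ #{s ∈ Q | f s = v}}

lemma mem_fullLines {Q : Finset (ℤ × ℤ)} {f : ℤ × ℤ → ℤ} {v : ℤ} :
    v ∈ fullLines Q f ↔ 2 ≤ #{s ∈ Q | f s = v} := by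
  refine ⟨fun h => (mem_filter.1 h).2, fun h => mem_filter.2 ⟨?_, h⟩⟩
  obtain ⟨s, hs⟩ := card_pos.1 (by omega : 0 < #{s ∈ Q | f s = v})
  exact mem_image.2 ⟨s, (mem_filter.1 hs).1, (mem_filter.1 hs).2⟩

lemma card_fullLines_le (Q : Finset (ℤ × ℤ)) (f : ℤ × ℤ → ℤ) :
    #(fullLines Q f) ≤ #Q / 2 := by
  rw [Nat.le_div_iff_mul_le two_pos, card_eq_sum_card_image f Q]
  calc #(fullLines Q f) * 2 ≤ ∑ v ∈ fullLines Q f, #{s ∈ Q | f s = v} := by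
        simpa using card_nsmul_le_sum _ _ 2 fun v hv => mem_fullLines.1 hv
    _ ≤ ∑ v ∈ Q.image f, #{s ∈ Q | f s = v} := sum_le_sum_of_subset (filter_subset _ _)

lemma mem_fullLines_of_ne {Q : Finset (ℤ × ℤ)} {f : ℤ × ℤ → ℤ} {u v : ℤ × ℤ} {w : ℤ}
    (hu : u ∈ Q) (hv : v ∈ Q) (huv : u ≠ v) (hfu : f u = w) (hfv : f v = w) :
    w ∈ fullLines Q f :=
  mem_fullLines.2 <| one_lt_card.2 ⟨u, mem_filter.2 ⟨hu, hfu⟩, v, mem_filter.2 ⟨hv, hfv⟩, huv⟩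

lemma fullLines_image_swap (Q : Finset (ℤ × ℤ)) (f : ℤ × ℤ → ℤ) :
    fullLines (Q.image Prod.swap) f = fullLines Q (f ∘ Prod.swap) := by
  ext v
  rw [mem_fullLines, mem_fullLines, filter_image, card_image_of_injective _ Prod.swap_injective]
  rfl

lemma ThreeInLine.image_swap {S : Finset (ℤ × ℤ)} (h : ThreeInLine S) :
    ThreeInLine (S.image Prod.swap) := by
  obtain ⟨a, ha, b, hb, c, hc, hab, hac, hbc, hline⟩ := h
  refine ⟨a.swap, mem_image_of_mem _ ha, b.swap, mem_image_of_mem _ hb, c.swap,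
    mem_image_of_mem _ hc, by simpa, by simpa, by simpa, ?_⟩
  simp only [Prod.fst_swap, Prod.snd_swap]
  omega

lemma IsGoodPlacement.image_swap {n : ℕ} {Q : Finset (ℤ × ℤ)} (hQ : IsGoodPlacement n Q) :
    IsGoodPlacement n (Q.image Prod.swap) := by
  obtain ⟨hsub, hfree, hmax⟩ := hQ
  have hboard : ∀ s, s ∈ board n → s.swap ∈ board n := by
    simp +contextual [board]
  refine ⟨?_, fun h => hfree ?_, fun s hs hsQ => ?_⟩
  · intro s hs
    obtain ⟨t, ht, rfl⟩ := mem_image.1 hs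
    exact hboard t (hsub ht)
  · simpa [image_image] using h.image_swap
  · have hs' : s.swap ∉ Q := fun h => hsQ (mem_image.2 ⟨s.swap, h, s.swap_swap⟩)
    simpa [image_insert, image_image] using (hmax _ (hboard s hs) hs').image_swap

lemma mem_fullLines_of_mem_insert {Q : Finset (ℤ × ℤ)} {s a b c : ℤ × ℤ} {g : ℤ × ℤ → ℤ}
    (ha : a ∈ insert s Q) (hb : b ∈ insert s Q) (hc : c ∈ insert s Q)
    (hab : a ≠ b) (hac : a ≠ c) (hbc : b ≠ c) (hs : s = a ∨ s = b ∨ s = c)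
    (hgab : g a = g b) (hgbc : g b = g c) : g s ∈ fullLines Q g := by
  rw [mem_insert] at ha hb hc
  rcases hs with rfl | rfl | rfl
  · exact mem_fullLines_of_ne (hb.resolve_left hab.symm) (hc.resolve_left hac.symm) hbc
      hgab.symm (hgab.trans hgbc).symm
  · exact mem_fullLines_of_ne (ha.resolve_left hab) (hc.resolve_left hbc.symm) hac hgab hgbc.symm
  · exact mem_fullLines_of_ne (ha.resolve_left hac) (hb.resolve_left hbc) hab (hgab.trans hgbc)
      hgbc

lemma IsGoodPlacement.mem_fullLines_of_notMem {n : ℕ} {Q : Finset (ℤ × ℤ)}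
    (hQ : IsGoodPlacement n Q) {s : ℤ × ℤ} (hs : s ∈ board n) (hsQ : s ∉ Q) :
    s.1 ∈ fullLines Q Prod.fst ∨ s.2 ∈ fullLines Q Prod.snd ∨
      s.1 - s.2 ∈ fullLines Q (fun t => t.1 - t.2) ∨
      s.1 + s.2 ∈ fullLines Q (fun t => t.1 + t.2) := by
  obtain ⟨a, ha, b, hb, c, hc, hab, hac, hbc, hline⟩ := hQ.2.2 s hs hsQ
  have hsabc : s = a ∨ s = b ∨ s = c := by
    by_contra! hne
    rw [mem_insert] at ha hb hc
    exact hQ.2.1 ⟨a, ha.resolve_left (Ne.symm hne.1), b, hb.resolve_left (Ne.symm hne.2.1),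
      c, hc.resolve_left (Ne.symm hne.2.2), hab, hac, hbc, hline⟩
  rcases hline with ⟨h₁, h₂⟩ | ⟨h₁, h₂⟩ | ⟨h₁, h₂⟩ | ⟨h₁, h₂⟩
  · exact .inl (mem_fullLines_of_mem_insert (g := Prod.fst) ha hb hc hab hac hbc hsabc h₁ h₂)
  · exact .inr <| .inl
      (mem_fullLines_of_mem_insert (g := Prod.snd) ha hb hc hab hac hbc hsabc h₁ h₂)
  · exact .inr <| .inr <| .inl
      (mem_fullLines_of_mem_insert (g := fun t => t.1 - t.2) ha hb hc hab hac hbc hsabc h₁ h₂)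
  · exact .inr <| .inr <| .inr
      (mem_fullLines_of_mem_insert (g := fun t => t.1 + t.2) ha hb hc hab hac hbc hsabc h₁ h₂)

lemma card_inter_add_card_inter_le {α : Type*} [DecidableEq α] (D s t : Finset α) :
    #(D ∩ s) + #(D ∩ t) ≤ #D + #(s ∩ t) := by
  rw [← card_union_add_card_inter]
  exact add_le_add (card_le_card (union_subset inter_subset_left inter_subset_left))
    (card_le_card (inter_subset_inter inter_subset_right inter_subset_right))

lemma card_inter_add_card_sdiff_le {α : Type*} [DecidableEq α] {C s t : Finset α}
    (hts : t ⊆ s) (hst : s \ C ⊆ t) : #(C ∩ t) + (#s - #t) ≤ #C := by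
  rw [← card_sdiff_of_subset hts, ← card_inter_add_card_sdiff C t]
  refine Nat.add_le_add_left (card_le_card fun x hx => ?_) _
  rw [mem_sdiff] at hx ⊢
  exact ⟨by_contra fun hC => hx.2 (hst (mem_sdiff.2 ⟨hx.1, hC⟩)), hx.2⟩

lemma card_Icc_inter_Icc_le_one {a b a' b' : ℤ} (h : b ≤ a') : #(Icc a b ∩ Icc a' b') ≤ 1 := by
  calc #(Icc a b ∩ Icc a' b') ≤ #(Icc a' b) :=
        card_le_card fun x hx => by simp only [mem_inter, mem_Icc] at hx ⊢; omega
    _ ≤ 1 := by rw [Int.card_Icc]; omega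

lemma card_Icc_le_of_card_uncovered_le_one {C D A : Finset ℤ} {c c' w : ℤ}
    (h : #{x ∈ Icc c c' | x ∉ C ∧ x - w ∉ D ∧ x + w ∉ A} ≤ 1) :
    #(Icc c c') ≤ #(C ∩ Icc c c') + #(D ∩ Icc (c - w) (c' - w)) +
      #(A ∩ Icc (c + w) (c' + w)) + 1 := by
  have hcover : Icc c c' ⊆ {x ∈ Icc c c' | x ∉ C ∧ x - w ∉ D ∧ x + w ∉ A} ∪ (C ∩ Icc c c') ∪
      (D ∩ Icc (c - w) (c' - w)).image (· + w) ∪ (A ∩ Icc (c + w) (c' + w)).image (· - w) := by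
    intro x hx
    rw [mem_Icc] at hx
    by_cases hC : x ∈ C
    · simp [hC, hx]
    by_cases hD : x - w ∈ D
    · exact mem_union_left _ <| mem_union_right _ <|
        mem_image.2 ⟨x - w, mem_inter.2 ⟨hD, mem_Icc.2 (by omega)⟩, by ring⟩
    by_cases hA : x + w ∈ A
    · exact mem_union_right _ <|
        mem_image.2 ⟨x + w, mem_inter.2 ⟨hA, mem_Icc.2 (by omega)⟩, by ring⟩
    simp [hC, hD, hA, hx]
  calc #(Icc c c') ≤ _ := card_le_card hcover
    _ ≤ _ := (card_union_le _ _).trans <| add_le_add ((card_union_le _ _).trans <|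
        add_le_add (card_union_le _ _) card_image_le) card_image_le
    _ ≤ _ := by omega

theorem two_mul_card_Icc_le_of_rows_covered {C D A : Finset ℤ} {n c c' r r' : ℤ}
    (hc : c ∈ Icc 1 n) (hc' : c' ∈ Icc 1 n) (hC : Icc 1 n \ C ⊆ Icc c c')
    (hspread : c' - c ≤ r' - r)
    (hr : #{x ∈ Icc c c' | x ∉ C ∧ x - r ∉ D ∧ x + r ∉ A} ≤ 1)
    (hr' : #{x ∈ Icc c c' | x ∉ C ∧ x - r' ∉ D ∧ x + r' ∉ A} ≤ 1) :
    2 * #(Icc 1 n) ≤ 2 * #C + #D + #A + 4 := by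
  have hrow := card_Icc_le_of_card_uncovered_le_one hr
  have hrow' := card_Icc_le_of_card_uncovered_le_one hr'
  have hdiag := card_inter_add_card_inter_le D (Icc (c - r') (c' - r')) (Icc (c - r) (c' - r))
  have hanti := card_inter_add_card_inter_le A (Icc (c + r) (c' + r)) (Icc (c + r') (c' + r'))
  -- `c' - c ≤ r' - r` is what makes the windows of rows `r` and `r'` overlap in one value at most
  have hdiag₁ : #(Icc (c - r') (c' - r') ∩ Icc (c - r) (c' - r)) ≤ 1 :=
    card_Icc_inter_Icc_le_one (by omega)
  have hanti₁ : #(Icc (c + r) (c' + r) ∩ Icc (c + r') (c' + r')) ≤ 1 :=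
    card_Icc_inter_Icc_le_one (by omega)
  have hsub : Icc c c' ⊆ Icc 1 n := Icc_subset_Icc (mem_Icc.1 hc).1 (mem_Icc.1 hc').2
  have hout := card_inter_add_card_sdiff_le hsub hC
  have hIcc := card_le_card hsub
  omega

lemma IsGoodPlacement.card_uncovered_le_one {n : ℕ} {Q : Finset (ℤ × ℤ)}
    (hQ : IsGoodPlacement n Q) {w c c' : ℤ} (hw : w ∈ Icc 1 (n : ℤ) \ fullLines Q Prod.snd)
    (hc : 1 ≤ c) (hc' : c' ≤ n) :
    #{x ∈ Icc c c' | x ∉ fullLines Q Prod.fst ∧ x - w ∉ fullLines Q (fun t => t.1 - t.2) ∧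
      x + w ∉ fullLines Q (fun t => t.1 + t.2)} ≤ 1 := by
  obtain ⟨hw, hwR⟩ := mem_sdiff.1 hw
  rw [mem_Icc] at hw
  refine (card_le_card_of_injOn (fun x => (x, w)) (t := {s ∈ Q | s.2 = w}) (fun x hx => ?_)
    (fun x _ y _ h => congrArg Prod.fst h)).trans ?_
  · obtain ⟨hx, hC, hD, hA⟩ := mem_filter.1 hx
    rw [mem_Icc] at hx
    refine mem_filter.2 ⟨?_, rfl⟩
    by_contra hxQ
    -- the row of `(x, w)` is not full, so no full line would pass through it
    have hxw : (x, w) ∈ board n := by simp only [board, mem_product, mem_Icc]; omega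
    rcases hQ.mem_fullLines_of_notMem hxw hxQ with h | h | h | h <;> contradiction
  · by_contra! h
    exact hwR (mem_fullLines.2 h)

lemma IsGoodPlacement.le_of_spread_le {n : ℕ} {Q : Finset (ℤ × ℤ)} (hQ : IsGoodPlacement n Q)
    {c c' r r' : ℤ} (hc : c ∈ Icc 1 (n : ℤ) \ fullLines Q Prod.fst)
    (hc' : c' ∈ Icc 1 (n : ℤ) \ fullLines Q Prod.fst)
    (hcols : Icc 1 (n : ℤ) \ fullLines Q Prod.fst ⊆ Icc c c')
    (hr : r ∈ Icc 1 (n : ℤ) \ fullLines Q Prod.snd)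
    (hr' : r' ∈ Icc 1 (n : ℤ) \ fullLines Q Prod.snd) (hspread : c' - c ≤ r' - r) :
    n ≤ 2 * (#Q / 2) + 2 := by
  have hc₁ := (mem_sdiff.1 hc).1
  have hc'₁ := (mem_sdiff.1 hc').1
  have key := two_mul_card_Icc_le_of_rows_covered hc₁ hc'₁ hcols hspread
    (hQ.card_uncovered_le_one hr (mem_Icc.1 hc₁).1 (mem_Icc.1 hc'₁).2)
    (hQ.card_uncovered_le_one hr' (mem_Icc.1 hc₁).1 (mem_Icc.1 hc'₁).2)
  have := card_fullLines_le Q Prod.fst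
  have := card_fullLines_le Q (fun t => t.1 - t.2)
  have := card_fullLines_le Q (fun t => t.1 + t.2)
  simp only [Int.card_Icc, add_sub_cancel_right, Int.toNat_natCast] at key
  omega

lemma le_card_fullLines_of_sdiff_eq_empty {n : ℕ} {Q : Finset (ℤ × ℤ)} {f : ℤ × ℤ → ℤ}
    (h : Icc 1 (n : ℤ) \ fullLines Q f = ∅) : n ≤ #Q / 2 := by
  have := card_le_card_sdiff_add_card (s := Icc 1 (n : ℤ)) (t := fullLines Q f)
  rw [h, card_empty, Int.card_Icc, add_sub_cancel_right, Int.toNat_natCast] at this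
  exact this.trans (by simpa using card_fullLines_le Q f)

theorem IsGoodPlacement.le_two_mul_card_div_two_add_two {n : ℕ} {Q : Finset (ℤ × ℤ)}
    (hQ : IsGoodPlacement n Q) : n ≤ 2 * (#Q / 2) + 2 := by
  rcases (Icc 1 (n : ℤ) \ fullLines Q Prod.fst).eq_empty_or_nonempty with hN | hN
  · have := le_card_fullLines_of_sdiff_eq_empty hN
    omega
  rcases (Icc 1 (n : ℤ) \ fullLines Q Prod.snd).eq_empty_or_nonempty with hM | hM
  · have := le_card_fullLines_of_sdiff_eq_empty hM
    omega
  have hcols : _ ⊆ Icc (min' _ hN) (max' _ hN) := fun x hx =>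
    mem_Icc.2 ⟨min'_le _ _ hx, le_max' _ _ hx⟩
  have hrows : _ ⊆ Icc (min' _ hM) (max' _ hM) := fun x hx =>
    mem_Icc.2 ⟨min'_le _ _ hx, le_max' _ _ hx⟩
  rcases le_total (max' _ hN - min' _ hN) (max' _ hM - min' _ hM) with h | h
  · exact hQ.le_of_spread_le (min'_mem _ hN) (max'_mem _ hN) hcols (min'_mem _ hM)
      (max'_mem _ hM) h
  · have hfst : fullLines (Q.image Prod.swap) Prod.fst = fullLines Q Prod.snd :=
      fullLines_image_swap Q Prod.fst
    have hsnd : fullLines (Q.image Prod.swap) Prod.snd = fullLines Q Prod.fst :=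
      fullLines_image_swap Q Prod.snd
    have := hQ.image_swap.le_of_spread_le (by rw [hfst]; exact min'_mem _ hM)
      (by rw [hfst]; exact max'_mem _ hM) (by rwa [hfst]) (by rw [hsnd]; exact min'_mem _ hN)
      (by rw [hsnd]; exact max'_mem _ hN) h
    rwa [card_image_of_injective _ Prod.swap_injective] at this

theorem IsGoodPlacement.sub_one_le_card_of_odd {n : ℕ} {Q : Finset (ℤ × ℤ)}
    (hQ : IsGoodPlacement n Q) (hn : Odd n) : n - 1 ≤ #Q := by
  have := hQ.le_two_mul_card_div_two_add_two
  obtain ⟨j, rfl⟩ := hn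
  omega

theorem stmt_4 (k n : ℕ) (hn : n = 4 * k + 3)
    (Q : Finset (ℤ × ℤ)) (hQ : IsGoodPlacement n Q) : n - 1 ≤ Q.card :=
  hQ.sub_one_le_card_of_odd ⟨2 * k + 1, by omega⟩
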